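/- arXiv:0709.2489 — 6 statements merged into one kernel-verified Lean document; each statement's English description precedes it below -/
import Mathlib

section
/- Let p(x) be irreducible over F and let F_{p^t} be the n×n Frobenius block of p(x)^t. If A is an n×n matrix over F satisfying A = F_{p^t}* A F_{p^t}, then A is a Toeplitz matrix. -/
open Matrix Polynomial

/-- The companion matrix of a monic polynomial `q = xⁿ + c₁xⁿ⁻¹ + ⋯ + cₙ`, as an
`n × n` matrix: `1`'s on the first subdiagonal, last column `(-cₙ, …, -c₁)ᵀ`,
and all other entries `0`. -/
def companionMatrix {F : Type*} [Field F] (n : ℕ) (q : Polynomial F) :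
    Matrix (Fin n) (Fin n) F :=
  Matrix.of fun i j =>
    if (j : ℕ) = n - 1 then -q.coeff i
    else if (i : ℕ) = (j : ℕ) + 1 then 1 else 0

/-!
Every column of a companion matrix but the last is a standard basis vector: `F_q eⱼ = eⱼ₊₁`.
Hence `A = F_q* A F_q` gives `A i j = eᵢ* F_q* A F_q eⱼ = A (i+1) (j+1)` for `i, j < n - 1`,
and a matrix that is invariant under this diagonal shift is Toeplitz.
-/

namespace Matrix

variable {α : Type*} {m : ℕ}

theorem apply_add_add_of_apply_succ_succ (A : Matrix (Fin (m + 1)) (Fin (m + 1)) α)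
    (hA : ∀ i j : Fin m, A i.succ j.succ = A i.castSucc j.castSucc) :
    ∀ (k i j : ℕ) (hi : i + k < m + 1) (hj : j + k < m + 1),
      A ⟨i + k, hi⟩ ⟨j + k, hj⟩ = A ⟨i, by omega⟩ ⟨j, by omega⟩
  | 0, _, _, _, _ => rfl
  | k + 1, i, j, hi, hj =>
    (hA ⟨i + k, by omega⟩ ⟨j + k, by omega⟩).trans
      (apply_add_add_of_apply_succ_succ A hA k i j (by omega) (by omega))

theorem exists_toeplitz_of_apply_succ_succ [Zero α] (A : Matrix (Fin (m + 1)) (Fin (m + 1)) α)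
    (hA : ∀ i j : Fin m, A i.succ j.succ = A i.castSucc j.castSucc) :
    ∃ f : ℤ → α, ∀ i j : Fin (m + 1), A i j = f ((i : ℤ) - (j : ℤ)) := by
  -- `f d` is the entry of the `d`-th diagonal lying in the first row or column, which
  -- `(i, j)` reaches by `min i j` steps back along the diagonal.
  refine ⟨fun d => if h : d.toNat < m + 1 ∧ (-d).toNat < m + 1
    then A ⟨d.toNat, h.1⟩ ⟨(-d).toNat, h.2⟩ else 0, fun i j => ?_⟩
  have hlt : ((i : ℤ) - j).toNat < m + 1 ∧ (-((i : ℤ) - j)).toNat < m + 1 := by omega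
  simp only [dif_pos hlt]
  have hshift := apply_add_add_of_apply_succ_succ A hA (min i j) _ _
    (by omega : ((i : ℤ) - j).toNat + min (i : ℕ) j < m + 1)
    (by omega : (-((i : ℤ) - j)).toNat + min (i : ℕ) j < m + 1)
  convert hshift using 2 <;> ext <;> simp only <;> omega

end Matrix

section CompanionMatrix

variable {F : Type*} [Field F] {m : ℕ} (q : F[X])

theorem companionMatrix_apply_castSucc (l : Fin (m + 1)) (j : Fin m) :
    companionMatrix (m + 1) q l j.castSucc = if l = j.succ then 1 else 0 := by
  simp only [companionMatrix, of_apply, Fin.val_castSucc, Fin.ext_iff, Fin.val_succ]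
  rw [if_neg (by omega)]

theorem mul_companionMatrix_apply_castSucc {ι : Type*} (M : Matrix ι (Fin (m + 1)) F)
    (i : ι) (j : Fin m) : (M * companionMatrix (m + 1) q) i j.castSucc = M i j.succ := by
  simp [mul_apply, companionMatrix_apply_castSucc]

theorem map_companionMatrix_transpose_mul_apply_castSucc {ι : Type*} (σ : F →+* F)
    (M : Matrix (Fin (m + 1)) ι F) (i : Fin m) (j : ι) :
    (((companionMatrix (m + 1) q).map σ)ᵀ * M) i.castSucc j = M i.succ j := by
  simp [mul_apply, companionMatrix_apply_castSucc, apply_ite σ]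

theorem apply_succ_succ_of_eq_map_companionMatrix_transpose_mul_mul (σ : F →+* F)
    (A : Matrix (Fin (m + 1)) (Fin (m + 1)) F)
    (hA : A = ((companionMatrix (m + 1) q).map σ)ᵀ * A * companionMatrix (m + 1) q)
    (i j : Fin m) : A i.succ j.succ = A i.castSucc j.castSucc := by
  conv_rhs => rw [hA]
  rw [mul_companionMatrix_apply_castSucc, map_companionMatrix_transpose_mul_apply_castSucc]

end CompanionMatrix

theorem toeplitz_of_fixed_by_frobenius_general {F : Type*} [Field F]
    (σ : F →+* F)
    (p : Polynomial F) (t : ℕ)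
    (n : ℕ)
    (A : Matrix (Fin n) (Fin n) F)
    (hA : A = ((companionMatrix n (p ^ t)).map σ)ᵀ * A * companionMatrix n (p ^ t)) :
    ∃ α : ℤ → F, ∀ i j : Fin n, A i j = α ((i : ℤ) - (j : ℤ)) := by
  cases n with
  | zero => exact ⟨0, fun i => i.elim0⟩
  | succ m =>
    exact exists_toeplitz_of_apply_succ_succ A
      (apply_succ_succ_of_eq_map_companionMatrix_transpose_mul_mul _ σ A hA)

/-- Let `p` be irreducible over `F` and let `F_{pᵗ}` be the `n × n`
Frobenius block (companion matrix) of `p ^ t`.  If `A = F_{pᵗ}* ⬝ A ⬝ F_{pᵗ}`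
(where `M* = (M.map σ)ᵀ` is the conjugate transpose with respect to the
involution `σ`), then `A` is a Toeplitz matrix: its `(i, j)` entry depends
only on `i - j`. -/
theorem toeplitz_of_fixed_by_frobenius {F : Type*} [Field F] (hchar : (2 : F) ≠ 0)
    (σ : F →+* F) (hσ : ∀ a : F, σ (σ a) = a)
    (p : Polynomial F) (hp : Irreducible p) (hmonic : p.Monic) (t : ℕ) (ht : 0 < t)
    (n : ℕ) (hn : n = (p ^ t).natDegree)
    (A : Matrix (Fin n) (Fin n) F)
    (hA : A = ((companionMatrix n (p ^ t)).map σ)ᵀ * A * companionMatrix n (p ^ t)) :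
    ∃ α : ℤ → F, ∀ i j : Fin n, A i j = α ((i : ℤ) - (j : ℤ)) :=
  toeplitz_of_fixed_by_frobenius_general σ p t n A hA
end

section
/- Let p(x) be irreducible over F and let F_{p^t} be the n×n Frobenius block of p(x)^t. If A is a *cosquare root of F_{p^t}, then A = A* F_{p^t} = F_{p^t}* A F_{p^t}; consequently A is a Toeplitz matrix, and moreover A has form (10): there exist a_0, …, a_{n−1} ∈ F such that the (i,j) entry of A equals a_{j−i} when j ≥ i and equals ā_{i−j−1} when j < i. -/
open Matrix Polynomial

section CosquareAux

variable {F : Type*} [Field F] {n : ℕ}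

theorem companionAux_entry (q : Polynomial F) (k j : Fin n) (hj : (j : ℕ) + 1 < n) :
    companionMatrix n q k j = if (k : ℕ) = (j : ℕ) + 1 then 1 else 0 := by
  have h : ¬ ((j : ℕ) = n - 1) := by omega
  simp [companionMatrix, h]

theorem companionAux_mul (q : Polynomial F) (M : Matrix (Fin n) (Fin n) F)
    (i j : Fin n) (hj : (j : ℕ) + 1 < n) :
    (M * companionMatrix n q) i j = M i ⟨(j : ℕ) + 1, hj⟩ := by
  rw [Matrix.mul_apply, Finset.sum_eq_single (⟨(j : ℕ) + 1, hj⟩ : Fin n)]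
  · rw [companionAux_entry q _ j hj]; simp
  · intro k _ hk
    rw [companionAux_entry q k j hj]
    have hk' : ¬ ((k : ℕ) = (j : ℕ) + 1) := fun h => hk (Fin.ext h)
    simp [hk']
  · intro h; exact absurd (Finset.mem_univ _) h

theorem companionAux_star_mul (σ : F →+* F) (q : Polynomial F)
    (M : Matrix (Fin n) (Fin n) F) (i j : Fin n) (hi : (i : ℕ) + 1 < n) :
    (((companionMatrix n q).map σ)ᵀ * M) i j = M ⟨(i : ℕ) + 1, hi⟩ j := by
  rw [Matrix.mul_apply, Finset.sum_eq_single (⟨(i : ℕ) + 1, hi⟩ : Fin n)]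
  · simp [Matrix.transpose_apply, Matrix.map_apply, companionAux_entry q _ i hi]
  · intro k _ hk
    have hk' : ¬ ((k : ℕ) = (i : ℕ) + 1) := fun h => hk (Fin.ext h)
    simp [Matrix.transpose_apply, Matrix.map_apply, companionAux_entry q k i hi, hk']
  · intro h; exact absurd (Finset.mem_univ _) h

end CosquareAux

/-- Let `p` be irreducible over `F` and `F_{pᵗ}` the `n × n`
Frobenius block of `p ^ t`.  If `A` is a *cosquare root of `F_{pᵗ}`, i.e. `A` is
nonsingular and `F_{pᵗ} = (A*)⁻¹ * A` (where `M* = (M.map σ)ᵀ`), then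
`A = A* F_{pᵗ} = F_{pᵗ}* A F_{pᵗ}`; consequently `A` is Toeplitz, and moreover
`A` has form (10): there are `a₀, …, a_{n-1}` with `A i j = a_{j-i}` for `j ≥ i`
and `A i j = σ (a_{i-j-1})` for `j < i`. -/
theorem cosquare_root_form {F : Type*} [Field F] (hchar : (2 : F) ≠ 0)
    (σ : F →+* F) (hσ : ∀ a : F, σ (σ a) = a)
    (p : Polynomial F) (hp : Irreducible p) (hmonic : p.Monic) (t : ℕ) (ht : 0 < t)
    (n : ℕ) (hn : n = (p ^ t).natDegree)
    (A : Matrix (Fin n) (Fin n) F) (hA : IsUnit A.det)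
    (hroot : companionMatrix n (p ^ t) = ((A.map σ)ᵀ)⁻¹ * A) :
    A = (A.map σ)ᵀ * companionMatrix n (p ^ t) ∧
    A = ((companionMatrix n (p ^ t)).map σ)ᵀ * A * companionMatrix n (p ^ t) ∧
    (∃ α : ℤ → F, ∀ i j : Fin n, A i j = α ((i : ℤ) - (j : ℤ))) ∧
    ∃ a : ℕ → F, ∀ i j : Fin n,
      A i j = if (i : ℕ) ≤ (j : ℕ) then a ((j : ℕ) - (i : ℕ))
              else σ (a ((i : ℕ) - (j : ℕ) - 1)) := by
  classical
  have hdetσ : IsUnit ((A.map σ)ᵀ).det := by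
    rw [Matrix.det_transpose]
    have h := (σ.map_det A).symm
    rw [RingHom.mapMatrix_apply] at h
    rw [h]
    exact hA.map σ
  have eq1 : A = (A.map σ)ᵀ * companionMatrix n (p ^ t) := by
    rw [hroot, ← Matrix.mul_assoc, Matrix.mul_nonsing_inv _ hdetσ, Matrix.one_mul]
  have hSS : ((A.map σ)ᵀ.map σ)ᵀ = A := by
    ext i j; simp [Matrix.transpose_apply, Matrix.map_apply, hσ]
  have hSA : (A.map σ)ᵀ = ((companionMatrix n (p ^ t)).map σ)ᵀ * A := by
    conv_lhs => rw [eq1]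
    rw [Matrix.map_mul, Matrix.transpose_mul, hSS]
  have eq2 : A = ((companionMatrix n (p ^ t)).map σ)ᵀ * A * companionMatrix n (p ^ t) := by
    rw [← hSA]
    exact eq1
  -- the one-step Toeplitz relation
  have step : ∀ (x y : ℕ) (hx : x + 1 < n) (hy : y + 1 < n),
      A ⟨x + 1, hx⟩ ⟨y + 1, hy⟩ = A ⟨x, by omega⟩ ⟨y, by omega⟩ := by
    intro x y hx hy
    have h := congrFun (congrFun eq2 ⟨x, by omega⟩) ⟨y, by omega⟩
    rw [Matrix.mul_assoc] at h
    rw [companionAux_star_mul σ _ _ (⟨x, by omega⟩ : Fin n) _ hx] at h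
    rw [companionAux_mul _ _ _ (⟨y, by omega⟩ : Fin n) hy] at h
    exact h.symm
  have shift : ∀ (m : ℕ) (i j k l : Fin n),
      (i : ℕ) = (k : ℕ) + m → (j : ℕ) = (l : ℕ) + m → A i j = A k l := by
    intro m
    induction m with
    | zero =>
      intro i j k l hik hjl
      have h1 : i = k := Fin.ext (by omega)
      have h2 : j = l := Fin.ext (by omega)
      rw [h1, h2]
    | succ m ih =>
      intro i j k l hik hjl
      have hk1 : (k : ℕ) + 1 < n := by have := i.isLt; omega
      have hl1 : (l : ℕ) + 1 < n := by have := j.isLt; omega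
      have h1 : A i j = A ⟨(k : ℕ) + 1, hk1⟩ ⟨(l : ℕ) + 1, hl1⟩ :=
        ih i j ⟨(k : ℕ) + 1, hk1⟩ ⟨(l : ℕ) + 1, hl1⟩
          (show (i : ℕ) = (k : ℕ) + 1 + m by omega)
          (show (j : ℕ) = (l : ℕ) + 1 + m by omega)
      rw [h1]
      exact step (k : ℕ) (l : ℕ) hk1 hl1
  have upper : ∀ (i j : Fin n), (i : ℕ) ≤ (j : ℕ) →
      A i j = A ⟨0, Nat.lt_of_le_of_lt (Nat.zero_le _) i.isLt⟩
        ⟨(j : ℕ) - (i : ℕ), Nat.lt_of_le_of_lt (Nat.sub_le _ _) j.isLt⟩ := by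
    intro i j hij
    exact shift (i : ℕ) i j _ _ (show (i : ℕ) = 0 + (i : ℕ) by omega)
      (show (j : ℕ) = (j : ℕ) - (i : ℕ) + (i : ℕ) by omega)
  have lower : ∀ (i j : Fin n) (h : (j : ℕ) + 1 < n),
      A i j = σ (A ⟨(j : ℕ) + 1, h⟩ i) := by
    intro i j h
    have heq := congrFun (congrFun eq1 i) j
    rw [companionAux_mul _ _ i j h] at heq
    simpa [Matrix.transpose_apply, Matrix.map_apply] using heq
  set a : ℕ → F := fun k => if h : k < n then
      A ⟨0, Nat.lt_of_le_of_lt (Nat.zero_le _) h⟩ ⟨k, h⟩ else 0 with ha_def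
  have ha : ∀ i j : Fin n,
      A i j = if (i : ℕ) ≤ (j : ℕ) then a ((j : ℕ) - (i : ℕ))
              else σ (a ((i : ℕ) - (j : ℕ) - 1)) := by
    intro i j
    by_cases hij : (i : ℕ) ≤ (j : ℕ)
    · rw [if_pos hij]
      have hlt : (j : ℕ) - (i : ℕ) < n := Nat.lt_of_le_of_lt (Nat.sub_le _ _) j.isLt
      rw [ha_def]
      simp only [dif_pos hlt]
      exact upper i j hij
    · rw [if_neg hij]
      push_neg at hij
      have hj1 : (j : ℕ) + 1 < n := by have := i.isLt; omega
      rw [lower i j hj1]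
      have h2 : (j : ℕ) + 1 ≤ (i : ℕ) := hij
      have hlt : (i : ℕ) - (j : ℕ) - 1 < n := by have := i.isLt; omega
      rw [ha_def]
      simp only [dif_pos hlt]
      congr 1
      have := upper ⟨(j : ℕ) + 1, hj1⟩ i h2
      rw [this]
      congr 1
  refine ⟨eq1, eq2, ?_, ⟨a, ha⟩⟩
  refine ⟨fun d => if d ≤ 0 then a (-d).toNat else σ (a (d.toNat - 1)), ?_⟩
  intro i j
  rw [ha i j]
  by_cases hij : (i : ℕ) ≤ (j : ℕ)
  · rw [if_pos hij]
    have h1 : (i : ℤ) - (j : ℤ) ≤ 0 := by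
      have : ((i : ℕ) : ℤ) ≤ ((j : ℕ) : ℤ) := by exact_mod_cast hij
      push_cast
      omega
    simp only [if_pos h1]
    congr 1
    push_cast
    omega
  · rw [if_neg hij]
    push_neg at hij
    have h1 : ¬ ((i : ℤ) - (j : ℤ) ≤ 0) := by
      have : ((j : ℕ) : ℤ) < ((i : ℕ) : ℤ) := by exact_mod_cast hij
      push_cast
      omega
    simp only [if_neg h1]
    congr 2
    push_cast
    omega
end

section
/- Let F_{p^t} be an n×n Frobenius block whose irreducible p satisfies condition (*), let C be a *cosquare root of F_{p^t}, and let φ be a nonzero function of form (♦). Then the matrix C·φ(F_{p^t}) is itself a *cosquare root of F_{p^t} (and hence, in particular, is a Toeplitz matrix). -/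
open Matrix Polynomial

/-- For a monic `f = xᵏ + a₁xᵏ⁻¹ + ⋯ + a_k` with `a_k ≠ 0`, the polynomial
`f^∨(x) = ā_k⁻¹ (1 + ā₁x + ⋯ + ā_{k-1}xᵏ⁻¹ + ā_k xᵏ)`. -/
noncomputable def polyVee {F : Type*} [Field F] (σ : F →+* F) (f : Polynomial F) :
    Polynomial F :=
  Polynomial.C (σ (f.coeff 0))⁻¹ * (f.map σ).reverse

/-- `φ(M) = b₀•1 + ∑_{j=1}^{r} (b_j • Mʲ + σ(b_j) • M⁻ʲ)`: the evaluation of a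
function `φ(x) = b̄_r x⁻ʳ + ⋯ + b̄₁x⁻¹ + b₀ + b₁x + ⋯ + b_r xʳ` of form (♦)
at an invertible matrix `M`. -/
noncomputable def phiMat {F : Type*} [Field F] (σ : F →+* F) {n : ℕ} (r : ℕ) (b : ℕ → F)
    (M : Matrix (Fin n) (Fin n) F) : Matrix (Fin n) (Fin n) F :=
  b 0 • (1 : Matrix (Fin n) (Fin n) F)
    + ∑ j ∈ Finset.Icc 1 r, (b j • M ^ j + σ (b j) • M⁻¹ ^ j)

/-- The coefficient conditions of form (♦) for `φ`, relative to the irreducible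
polynomial `p` and the involution `σ`; here `r = ⌊(deg p)/2⌋`. -/
def formDiamond {F : Type*} [Field F] (σ : F →+* F) (p : Polynomial F) (r : ℕ)
    (b : ℕ → F) : Prop :=
  b 0 = σ (b 0) ∧
  (Even p.natDegree →
    (σ = RingHom.id F → b r = 0) ∧
    (σ ≠ RingHom.id F → p.eval 0 ≠ 1 → b r = σ (b r)) ∧
    (σ ≠ RingHom.id F → p.eval 0 = 1 → b r = - σ (b r)))

/-!
Write `M` for the Frobenius block and `X* = (X.map σ)ᵀ`. From `C* M = C` one gets
`C = M* C M`, i.e. conjugation by `C` sends `M` to `M^{-*}` and `M⁻¹` to `M*`; as `b₀` is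
σ-fixed it therefore sends `Φ = φ(M)` to `Φ*`, whence `(CΦ)* M = Φ* C = CΦ`. The matrix `Φ`
is nonsingular because `Φ Mʳ = g(M)` for the polynomial `g = xʳ φ(x)`: its degree is at most
`2r ≤ deg p` and (♦) keeps it from being a multiple of `p`, so `g` is coprime to `pᵗ`, which
annihilates `M`. Finally every `D` with `D = M* D M` is Toeplitz, since `M` shifts the standard
basis.
-/

section ConjTranspose

variable {F : Type*} [Field F] (σ : F →+* F) {m : Type*}

def starBy (A : Matrix m m F) : Matrix m m F := (A.map σ)ᵀ

lemma starBy_mul [Fintype m] (A B : Matrix m m F) :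
    starBy σ (A * B) = starBy σ B * starBy σ A := by
  rw [starBy, Matrix.map_mul, transpose_mul, starBy, starBy]

lemma starBy_one [DecidableEq m] : starBy σ (1 : Matrix m m F) = 1 := by
  simp [starBy]

lemma starBy_add (A B : Matrix m m F) : starBy σ (A + B) = starBy σ A + starBy σ B := by
  ext i j; simp [starBy]

lemma starBy_smul (a : F) (A : Matrix m m F) : starBy σ (a • A) = σ a • starBy σ A := by
  ext i j; simp [starBy]

lemma starBy_sum {ι : Type*} (s : Finset ι) (A : ι → Matrix m m F) :
    starBy σ (∑ i ∈ s, A i) = ∑ i ∈ s, starBy σ (A i) := by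
  ext i j; simp [starBy, Matrix.sum_apply]

lemma starBy_pow [Fintype m] [DecidableEq m] (A : Matrix m m F) (k : ℕ) :
    starBy σ (A ^ k) = starBy σ A ^ k := by
  induction k with
  | zero => simp [starBy_one]
  | succ k ih => rw [pow_succ, starBy_mul, ih, pow_succ']

lemma starBy_starBy (hσ : ∀ a, σ (σ a) = a) (A : Matrix m m F) :
    starBy σ (starBy σ A) = A := by
  ext i j; simp [starBy, hσ]

lemma det_starBy [Fintype m] [DecidableEq m] (A : Matrix m m F) : (starBy σ A).det = σ A.det := by
  rw [starBy, det_transpose]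
  exact (RingHom.map_det σ A).symm

lemma isUnit_det_starBy [Fintype m] [DecidableEq m] {A : Matrix m m F} (hA : IsUnit A.det) :
    IsUnit (starBy σ A).det := by
  rw [det_starBy]; exact hA.map σ

lemma starBy_inv [Fintype m] [DecidableEq m] {A : Matrix m m F} (hA : IsUnit A.det) :
    starBy σ A⁻¹ = (starBy σ A)⁻¹ :=
  (inv_eq_left_inv (by rw [← starBy_mul, mul_nonsing_inv A hA, starBy_one])).symm

variable [Fintype m] [DecidableEq m]

def IsCosquareRoot (M A : Matrix m m F) : Prop :=
  IsUnit A.det ∧ M = (starBy σ A)⁻¹ * A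

variable {σ} {M A : Matrix m m F}

lemma isCosquareRoot_iff : IsCosquareRoot σ M A ↔ IsUnit A.det ∧ starBy σ A * M = A := by
  refine and_congr_right fun hA => ?_
  have hA' := isUnit_det_starBy σ hA
  constructor
  · rintro rfl; rw [← mul_assoc, mul_nonsing_inv _ hA', one_mul]
  · intro h
    calc M = (starBy σ A)⁻¹ * (starBy σ A * M) := by
          rw [← mul_assoc, nonsing_inv_mul _ hA', one_mul]
      _ = (starBy σ A)⁻¹ * A := by rw [h]

lemma IsCosquareRoot.isUnit_det (h : IsCosquareRoot σ M A) : IsUnit M.det := by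
  rw [h.2, det_mul]
  exact (isUnit_nonsing_inv_det _ (isUnit_det_starBy σ h.1)).mul h.1

lemma IsCosquareRoot.eq_starBy_mul_mul (hσ : ∀ a, σ (σ a) = a) (h : IsCosquareRoot σ M A) :
    A = starBy σ M * A * M := by
  obtain ⟨-, hAM⟩ := isCosquareRoot_iff.mp h
  have hMA : starBy σ M * A = starBy σ A := by
    simpa only [starBy_mul, starBy_starBy σ hσ] using congrArg (starBy σ) hAM
  rw [hMA, hAM]

lemma IsCosquareRoot.semiconjBy (hσ : ∀ a, σ (σ a) = a) (h : IsCosquareRoot σ M A) :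
    SemiconjBy A M (starBy σ M)⁻¹ := by
  have hM' := isUnit_det_starBy σ h.isUnit_det
  rw [SemiconjBy]
  conv_rhs => rw [h.eq_starBy_mul_mul hσ]
  rw [← mul_assoc, ← mul_assoc, nonsing_inv_mul _ hM', one_mul]

lemma IsCosquareRoot.semiconjBy_inv (hσ : ∀ a, σ (σ a) = a) (h : IsCosquareRoot σ M A) :
    SemiconjBy A M⁻¹ (starBy σ M) := by
  rw [SemiconjBy]
  conv_lhs => rw [h.eq_starBy_mul_mul hσ]
  rw [mul_assoc, mul_nonsing_inv _ h.isUnit_det, mul_one]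

lemma IsCosquareRoot.mul {B : Matrix m m F} (h : IsCosquareRoot σ M A) (hB : IsUnit B.det)
    (hBA : starBy σ B * A = A * B) : IsCosquareRoot σ M (A * B) := by
  obtain ⟨hA, hAM⟩ := isCosquareRoot_iff.mp h
  refine isCosquareRoot_iff.mpr ⟨by rw [det_mul]; exact hA.mul hB, ?_⟩
  rw [starBy_mul, mul_assoc, hAM, hBA]

end ConjTranspose

lemma SemiconjBy.sum_right {R ι : Type*} [NonUnitalNonAssocSemiring R] {a : R}
    {s : Finset ι} {x y : ι → R} (h : ∀ i ∈ s, SemiconjBy a (x i) (y i)) :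
    SemiconjBy a (∑ i ∈ s, x i) (∑ i ∈ s, y i) := by
  rw [SemiconjBy, Finset.mul_sum, Finset.sum_mul]
  exact Finset.sum_congr rfl h

section PhiMat

variable {F : Type*} [Field F] {σ : F →+* F} {n r : ℕ} {b : ℕ → F}

lemma SemiconjBy.phiMat {A M N : Matrix (Fin n) (Fin n) F} (h : SemiconjBy A M N)
    (h' : SemiconjBy A M⁻¹ N⁻¹) : SemiconjBy A (phiMat σ r b M) (phiMat σ r b N) := by
  refine ((SemiconjBy.one_right A).smul_right _).add_right
    (SemiconjBy.sum_right fun j _ => ?_)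
  exact ((h.pow_right j).smul_right _).add_right ((h'.pow_right j).smul_right _)

lemma starBy_phiMat (hσ : ∀ a, σ (σ a) = a) (hb0 : σ (b 0) = b 0)
    {M : Matrix (Fin n) (Fin n) F} (hM : IsUnit M.det) :
    starBy σ (phiMat σ r b M) = phiMat σ r b (starBy σ M)⁻¹ := by
  rw [phiMat, phiMat, nonsing_inv_nonsing_inv _ (isUnit_det_starBy σ hM), starBy_add,
    starBy_smul, starBy_one, hb0, starBy_sum]
  congr 1
  refine Finset.sum_congr rfl fun j _ => ?_
  rw [starBy_add, starBy_smul, starBy_smul, starBy_pow, starBy_pow, starBy_inv σ hM, hσ, add_comm]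

lemma IsCosquareRoot.starBy_phiMat_mul (hσ : ∀ a, σ (σ a) = a) (hb0 : σ (b 0) = b 0)
    {M A : Matrix (Fin n) (Fin n) F} (h : IsCosquareRoot σ M A) :
    starBy σ (phiMat σ r b M) * A = A * phiMat σ r b M := by
  have hM' := isUnit_det_starBy σ h.isUnit_det
  rw [starBy_phiMat hσ hb0 h.isUnit_det]
  refine ((h.semiconjBy hσ).phiMat ?_).symm
  rw [nonsing_inv_nonsing_inv _ hM']
  exact h.semiconjBy_inv hσ

end PhiMat

section PhiPoly

variable {F : Type*} [Field F] (σ : F →+* F) (r : ℕ) (b : ℕ → F)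

/-- The polynomial `xʳ φ(x)`. -/
noncomputable def phiPoly : F[X] :=
  ∑ j ∈ Finset.range (r + 1), C (b j) * X ^ (r + j) +
    ∑ j ∈ Finset.Icc 1 r, C (σ (b j)) * X ^ (r - j)

lemma phiMat_mul_pow {n : ℕ} {M : Matrix (Fin n) (Fin n) F} (hM : IsUnit M.det) :
    phiMat σ r b M * M ^ r = aeval M (phiPoly σ r b) := by
  have hinv : ∀ j ≤ r, M⁻¹ ^ j * M ^ r = M ^ (r - j) := fun j hj => by
    rw [← Nat.add_sub_cancel' hj, pow_add, ← mul_assoc, inv_pow',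
      nonsing_inv_mul _ (det_pow M j ▸ hM.pow j), one_mul, Nat.add_sub_cancel_left]
  have hrange : Finset.range (r + 1) = insert 0 (Finset.Icc 1 r) := by
    ext j; simp only [Finset.mem_range, Finset.mem_insert, Finset.mem_Icc]; omega
  simp only [phiPoly, phiMat, map_add, map_sum, _root_.map_mul, aeval_C, map_pow, aeval_X,
    ← Algebra.smul_def, add_mul, smul_mul_assoc, one_mul, Finset.sum_mul, ← pow_add]
  rw [hrange, Finset.sum_insert (by simp), add_zero, add_assoc, ← Finset.sum_add_distrib]
  refine congrArg _ (Finset.sum_congr rfl fun j hj => ?_)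
  rw [hinv j (Finset.mem_Icc.mp hj).2, add_comm j r]

lemma coeff_phiPoly_add {j : ℕ} (hj : j ≤ r) : (phiPoly σ r b).coeff (r + j) = b j := by
  simp only [phiPoly, coeff_add, finsetSum_coeff, coeff_C_mul, coeff_X_pow]
  rw [Finset.sum_eq_single j (fun i _ hi => by rw [if_neg (by omega), mul_zero])
    (fun hj' => absurd (Finset.mem_range.mpr (by omega)) hj'),
    Finset.sum_eq_zero fun i hi => by rw [if_neg (by simp at hi; omega), mul_zero]]
  simp

lemma coeff_phiPoly_zero (hr : 1 ≤ r) : (phiPoly σ r b).coeff 0 = σ (b r) := by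
  simp only [phiPoly, coeff_add, finsetSum_coeff, coeff_C_mul, coeff_X_pow]
  rw [Finset.sum_eq_zero fun i _ => by rw [if_neg (by omega), mul_zero],
    Finset.sum_eq_single r (fun i hi hir => by rw [if_neg (by simp at hi; omega), mul_zero])
    (fun hr' => absurd (Finset.mem_Icc.mpr ⟨hr, le_rfl⟩) hr')]
  simp

lemma natDegree_phiPoly_le : (phiPoly σ r b).natDegree ≤ 2 * r := by
  refine (natDegree_add_le _ _).trans (max_le ?_ ?_) <;>
    refine natDegree_sum_le_of_forall_le _ _ fun j hj => (natDegree_C_mul_le _ _).trans ?_ <;>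
    simp only [natDegree_X_pow] <;> simp at hj <;> omega

end PhiPoly

section NotDvd

variable {F : Type*} [Field F] {σ : F →+* F} {p : F[X]} {r : ℕ} {b : ℕ → F}

lemma formDiamond.map_ne_eval_zero_mul (hchar : (2 : F) ≠ 0) (hb : formDiamond σ p r b)
    (heven : Even p.natDegree) (hbr : b r ≠ 0) : σ (b r) ≠ p.eval 0 * b r := by
  intro h
  obtain ⟨hid, hne, hone⟩ := hb.2 heven
  by_cases hσid : σ = RingHom.id F
  · exact hbr (hid hσid)
  by_cases hp0 : p.eval 0 = 1
  · have h2 : 2 * b r = 0 := by linear_combination hone hσid hp0 - h - b r * hp0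
    exact hbr ((mul_eq_zero.mp h2).resolve_left hchar)
  · refine hp0 (mul_right_cancel₀ hbr ?_)
    rw [← h, one_mul, ← hne hσid hp0]

/-- If `p ∣ xʳ φ(x)` then, by degrees, `xʳ φ(x) = c p`; comparing the top and constant
coefficients forces `b̄_r = p(0) b_r`, which (♦) rules out. -/
lemma not_dvd_phiPoly (hchar : (2 : F) ≠ 0) (hmonic : p.Monic) (hdeg : 0 < p.natDegree)
    (hr : r = p.natDegree / 2) (hb : formDiamond σ p r b) (hbne : ∃ j ≤ r, b j ≠ 0) :
    ¬ p ∣ phiPoly σ r b := by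
  intro hdvd
  set c := (phiPoly σ r b).leadingCoeff
  have hg : phiPoly σ r b = C c * p :=
    eq_leadingCoeff_mul_of_monic_of_dvd_of_natDegree_le hmonic hdvd
      ((natDegree_phiPoly_le σ r b).trans (by omega))
  have hcoeff : ∀ k, (phiPoly σ r b).coeff k = c * p.coeff k := fun k => by
    rw [hg, coeff_C_mul]
  have hc : c ≠ 0 := by
    intro hc
    obtain ⟨j, hj, hbj⟩ := hbne
    exact hbj (by rw [← coeff_phiPoly_add σ r b hj, hcoeff, hc, zero_mul])
  have heven : p.natDegree = r + r := by
    by_contra hodd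
    have htop := hcoeff p.natDegree
    rw [coeff_eq_zero_of_natDegree_lt ((natDegree_phiPoly_le σ r b).trans_lt (by omega)),
      hmonic.coeff_natDegree, mul_one] at htop
    exact hc htop.symm
  have hbr : b r = c := by
    rw [← coeff_phiPoly_add σ r b le_rfl, hcoeff, ← heven, hmonic.coeff_natDegree, mul_one]
  refine hb.map_ne_eval_zero_mul hchar ⟨r, heven⟩ (hbr ▸ hc) ?_
  rw [← coeff_phiPoly_zero σ r b (by omega), hcoeff, coeff_zero_eq_eval_zero, hbr, mul_comm]

end NotDvd

section Companion

variable {F : Type*} [Field F] {n : ℕ} (q : F[X])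

lemma companionMatrix_apply_of_lt (i : Fin n) {j : Fin n} (hj : (j : ℕ) + 1 < n) :
    companionMatrix n q i j = if i = ⟨j + 1, hj⟩ then 1 else 0 := by
  simp only [companionMatrix, of_apply, Fin.ext_iff]
  rw [if_neg (by omega)]

lemma companionMatrix_mulVec_single {j : ℕ} (hj : j + 1 < n) :
    companionMatrix n q *ᵥ Pi.single ⟨j, by omega⟩ 1 = Pi.single ⟨j + 1, hj⟩ 1 := by
  ext i
  rw [mulVec_single_one, col_apply, companionMatrix_apply_of_lt q i hj, Pi.single_apply]

lemma companionMatrix_pow_mulVec_single_zero {k : ℕ} (hk : k < n) :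
    companionMatrix n q ^ k *ᵥ Pi.single ⟨0, by omega⟩ 1 = Pi.single ⟨k, hk⟩ 1 := by
  induction k with
  | zero => rw [pow_zero, one_mulVec]
  | succ k ih =>
    rw [pow_succ', ← mulVec_mulVec, ih (by omega), companionMatrix_mulVec_single q hk]

lemma companionMatrix_pow_mulVec_single_zero_self (h0 : 0 < n) :
    companionMatrix n q ^ n *ᵥ Pi.single ⟨0, h0⟩ 1 = fun i : Fin n => -q.coeff i := by
  have hsplit : companionMatrix n q ^ n = companionMatrix n q * companionMatrix n q ^ (n - 1) := by
    rw [← pow_succ', Nat.sub_add_cancel h0]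
  ext i
  rw [hsplit, ← mulVec_mulVec, companionMatrix_pow_mulVec_single_zero q (Nat.sub_lt h0 one_pos),
    mulVec_single_one]
  simp [companionMatrix]

/-- `e₀` is a cyclic vector of the companion matrix `M`, and `q(M) e₀ = 0`. -/
lemma aeval_companionMatrix_self (hq : q.Monic) (hn : q.natDegree = n) :
    aeval (companionMatrix n q) q = 0 := by
  set M := companionMatrix n q
  refine ext_of_mulVec_single fun v => ?_
  have h0 : 0 < n := Fin.pos v
  have hcyclic : aeval M q *ᵥ Pi.single ⟨0, h0⟩ 1 = 0 := by
    have hlead : q.coeff n = 1 := hn ▸ hq.coeff_natDegree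
    rw [aeval_eq_sum_range, hn, sum_mulVec, Finset.sum_range_succ, hlead, one_smul,
      companionMatrix_pow_mulVec_single_zero_self q h0]
    have hbasis (k : Fin n) : M ^ (k : ℕ) *ᵥ Pi.single ⟨0, h0⟩ 1 = Pi.single k 1 :=
      companionMatrix_pow_mulVec_single_zero q k.isLt
    rw [← Fin.sum_univ_eq_sum_range fun k => (q.coeff k • M ^ k) *ᵥ Pi.single ⟨0, h0⟩ 1]
    simp only [smul_mulVec, hbasis]
    ext i
    simp [Pi.single_apply]
  have hcomm : aeval M q * M ^ (v : ℕ) = M ^ (v : ℕ) * aeval M q := by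
    simpa using congrArg (aeval M) (mul_comm q (X ^ (v : ℕ)))
  rw [zero_mulVec, ← Fin.eta v v.isLt, ← companionMatrix_pow_mulVec_single_zero q v.isLt,
    mulVec_mulVec, hcomm, ← mulVec_mulVec, hcyclic, mulVec_zero]

end Companion

lemma isUnit_aeval_of_isCoprime {R A : Type*} [CommRing R] [Ring A] [Algebra R A] {a : A}
    {q g : R[X]} (hq : aeval a q = 0) (hqg : IsCoprime q g) : IsUnit (aeval a g) := by
  obtain ⟨u, v, huv⟩ := hqg
  have hleft : aeval a v * aeval a g = 1 := by
    simpa [hq] using congrArg (aeval a) huv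
  have hright : aeval a g * aeval a v = 1 := by
    rw [← _root_.map_mul, mul_comm, _root_.map_mul, hleft]
  exact ⟨⟨_, _, hright, hleft⟩, rfl⟩

lemma isUnit_det_phiMat {F : Type*} [Field F] {σ : F →+* F} {r : ℕ} {b : ℕ → F} {n : ℕ}
    {M : Matrix (Fin n) (Fin n) F} {q : F[X]} (hM : IsUnit M.det) (hq : aeval M q = 0)
    (hcop : IsCoprime q (phiPoly σ r b)) : IsUnit (phiMat σ r b M).det := by
  have h := (isUnit_iff_isUnit_det _).mp (isUnit_aeval_of_isCoprime hq hcop)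
  rw [← phiMat_mul_pow σ r b hM, det_mul] at h
  exact isUnit_of_mul_isUnit_left h

section Toeplitz

lemma exists_toeplitz_of_apply_succ {α : Type*} [Zero α] {n : ℕ} (A : Matrix (Fin n) (Fin n) α)
    (h : ∀ (i j : Fin n) (hi : (i : ℕ) + 1 < n) (hj : (j : ℕ) + 1 < n),
      A ⟨i + 1, hi⟩ ⟨j + 1, hj⟩ = A i j) :
    ∃ f : ℤ → α, ∀ i j : Fin n, A i j = f ((i : ℤ) - (j : ℤ)) := by
  have hshift : ∀ (k : ℕ) (i j i' j' : Fin n), (i' : ℕ) = i + k → (j' : ℕ) = j + k →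
      A i' j' = A i j := by
    intro k
    induction k with
    | zero => intro i j i' j' hi hj; rw [Fin.ext hi, Fin.ext hj]
    | succ k ih =>
      intro i j i' j' hi hj
      have hstep := h ⟨i + k, by omega⟩ ⟨j + k, by omega⟩ (by dsimp only; omega)
        (by dsimp only; omega)
      rw [← ih i j ⟨i + k, by omega⟩ ⟨j + k, by omega⟩ rfl rfl, ← hstep]
      congr 1 <;> ext <;> dsimp only <;> omega
  have hfactors : Function.FactorsThrough (fun ij : Fin n × Fin n => A ij.1 ij.2)
      (fun ij => (ij.1 : ℤ) - ij.2) := by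
    rintro ⟨i, j⟩ ⟨i', j'⟩ hd
    simp only at hd ⊢
    rcases le_total (i : ℕ) i' with hii | hii
    · exact (hshift (i' - i) i j i' j' (by omega) (by omega)).symm
    · exact hshift (i - i') i' j' i j (by omega) (by omega)
  exact ⟨_, fun i j => (hfactors.extend_apply 0 (i, j)).symm⟩

variable {F : Type*} [Field F] {σ : F →+* F} {n : ℕ} {q : F[X]}

lemma starBy_companionMatrix_mul_mul_apply (A : Matrix (Fin n) (Fin n) F) {i j : Fin n}
    (hi : (i : ℕ) + 1 < n) (hj : (j : ℕ) + 1 < n) :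
    (starBy σ (companionMatrix n q) * A * companionMatrix n q) i j =
      A ⟨i + 1, hi⟩ ⟨j + 1, hj⟩ := by
  simp [mul_apply, starBy, companionMatrix_apply_of_lt q _ hi, companionMatrix_apply_of_lt q _ hj]

lemma IsCosquareRoot.exists_toeplitz (hσ : ∀ a, σ (σ a) = a) {A : Matrix (Fin n) (Fin n) F}
    (h : IsCosquareRoot σ (companionMatrix n q) A) :
    ∃ f : ℤ → F, ∀ i j : Fin n, A i j = f ((i : ℤ) - (j : ℤ)) :=
  exists_toeplitz_of_apply_succ A fun i j hi hj => by
    conv_rhs => rw [h.eq_starBy_mul_mul hσ]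
    rw [starBy_companionMatrix_mul_mul_apply A hi hj]

end Toeplitz

theorem cosquare_root_mul_phi_general {F : Type*} [Field F] (hchar : (2 : F) ≠ 0)
    (σ : F →+* F) (hσ : ∀ a : F, σ (σ a) = a)
    (p : Polynomial F) (hp : Irreducible p) (hmonic : p.Monic) (t : ℕ)
    (n : ℕ) (hn : n = (p ^ t).natDegree)
    (Cm : Matrix (Fin n) (Fin n) F) (hC : IsUnit Cm.det)
    (hCroot : companionMatrix n (p ^ t) = ((Cm.map σ)ᵀ)⁻¹ * Cm)
    (r : ℕ) (hr : r = p.natDegree / 2) (b : ℕ → F)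
    (hb : formDiamond σ p r b) (hbne : ∃ j ≤ r, b j ≠ 0) :
    IsUnit (Cm * phiMat σ r b (companionMatrix n (p ^ t))).det ∧
    companionMatrix n (p ^ t) =
      (((Cm * phiMat σ r b (companionMatrix n (p ^ t))).map σ)ᵀ)⁻¹ *
        (Cm * phiMat σ r b (companionMatrix n (p ^ t))) ∧
    ∃ α : ℤ → F, ∀ i j : Fin n,
      (Cm * phiMat σ r b (companionMatrix n (p ^ t))) i j = α ((i : ℤ) - (j : ℤ)) := by
  have hroot : IsCosquareRoot σ (companionMatrix n (p ^ t)) Cm := ⟨hC, hCroot⟩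
  have hcop : IsCoprime (p ^ t) (phiPoly σ r b) :=
    (hp.coprime_iff_not_dvd.mpr
      (not_dvd_phiPoly hchar hmonic hp.natDegree_pos hr hb hbne)).pow_left
  have hphi : IsUnit (phiMat σ r b (companionMatrix n (p ^ t))).det :=
    isUnit_det_phiMat hroot.isUnit_det (aeval_companionMatrix_self _ (hmonic.pow t) hn.symm) hcop
  have hD := hroot.mul hphi (hroot.starBy_phiMat_mul hσ hb.1.symm)
  exact ⟨hD.1, hD.2, hD.exists_toeplitz hσ⟩

/-- Let `F_{pᵗ}` be an `n × n` Frobenius block whose irreducible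
`p` satisfies condition (*), let `C` be a *cosquare root of `F_{pᵗ}` (so `C` is
nonsingular and `F_{pᵗ} = (C*)⁻¹ C` with `M* = (M.map σ)ᵀ`), and let `φ` be a
nonzero function of form (♦).  Then `C ⬝ φ(F_{pᵗ})` is itself a *cosquare root
of `F_{pᵗ}`, and in particular it is a Toeplitz matrix. -/
theorem cosquare_root_mul_phi {F : Type*} [Field F] (hchar : (2 : F) ≠ 0)
    (σ : F →+* F) (hσ : ∀ a : F, σ (σ a) = a)
    (p : Polynomial F) (hp : Irreducible p) (hmonic : p.Monic) (t : ℕ) (ht : 0 < t)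
    (n : ℕ) (hn : n = (p ^ t).natDegree)
    (hstar : p ≠ X ∧ p = polyVee σ p ∧
      (σ = RingHom.id F → p ≠ X + C ((-1 : F) ^ (n + 1))))
    (Cm : Matrix (Fin n) (Fin n) F) (hC : IsUnit Cm.det)
    (hCroot : companionMatrix n (p ^ t) = ((Cm.map σ)ᵀ)⁻¹ * Cm)
    (r : ℕ) (hr : r = p.natDegree / 2) (b : ℕ → F)
    (hb : formDiamond σ p r b) (hbne : ∃ j ≤ r, b j ≠ 0) :
    IsUnit (Cm * phiMat σ r b (companionMatrix n (p ^ t))).det ∧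
    companionMatrix n (p ^ t) =
      (((Cm * phiMat σ r b (companionMatrix n (p ^ t))).map σ)ᵀ)⁻¹ *
        (Cm * phiMat σ r b (companionMatrix n (p ^ t))) ∧
    ∃ α : ℤ → F, ∀ i j : Fin n,
      (Cm * phiMat σ r b (companionMatrix n (p ^ t))) i j = α ((i : ℤ) - (j : ℤ)) :=
  cosquare_root_mul_phi_general hchar σ hσ p hp hmonic t n hn Cm hC hCroot r hr b hb hbne
end

section
/- For every n ≥ 1, the matrix Γ_n is nonsingular and Γ_n^{−T} Γ_n is similar to the Jordan block J_n((−1)^{n+1}). -/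
open Matrix

/-- The `n × n` upper-triangular Jordan block with eigenvalue `lam`. -/
def jordanBlock (n : ℕ) (lam : ℂ) : Matrix (Fin n) (Fin n) ℂ :=
  Matrix.of fun i j =>
    if i = j then lam else if (i : ℕ) + 1 = (j : ℕ) then 1 else 0

/-- The `n × n` matrix `Γ_n`: in 1-based indexing, its `(i, j)` entry is
`(-1)^(j+1)` if `i + j = n + 1`, `(-1)^j` if `i + j = n + 2`, and `0` otherwise. -/
def Gamma (n : ℕ) : Matrix (Fin n) (Fin n) ℂ :=
  Matrix.of fun i j =>
    if (i : ℕ) + (j : ℕ) = n - 1 then (-1 : ℂ) ^ (j : ℕ)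
    else if (i : ℕ) + (j : ℕ) = n then (-1 : ℂ) ^ ((j : ℕ) + 1) else 0

/-!
Let `N` be the nilpotent upper shift, `T` the strictly upper triangular all-ones matrix, `Z` the
signed reversal (entries `(-1)^i` on the antidiagonal) and `λ = (-1)^(n+1)`. Then
`Γᵀ = Z (1 - N)` and `Γ = λ Z (1 + N)`, so `Γ` is invertible and, since `(1 - N) T = N`,
its cosquare is the Cayley transform `Γ⁻ᵀ Γ = λ (1 - N)⁻¹ (1 + N) = λ (1 + 2T)`.

A strictly upper triangular `X` with nonzero superdiagonal is similar to `N`: the columns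
`p_j = X^(n-1-j) e_(n-1)` form an upper triangular matrix with nonzero diagonal, and
`X p_j = p_(j-1)`, `X p_0 = X^n e_(n-1) = 0`. For `X = 2λT` this gives `Γ⁻ᵀ Γ ∼ λ + N = J_n(λ)`.
-/

namespace Matrix

def upperShift (R : Type*) [Zero R] [One R] (n : ℕ) : Matrix (Fin n) (Fin n) R :=
  of fun i j => if (i : ℕ) + 1 = j then 1 else 0

def strictUpperOnes (R : Type*) [Zero R] [One R] (n : ℕ) : Matrix (Fin n) (Fin n) R :=
  of fun i j => if i < j then 1 else 0

def IsStrictUpperTriangular {m R : Type*} [LE m] [Zero R] (M : Matrix m m R) : Prop :=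
  ∀ ⦃i j⦄, j ≤ i → M i j = 0

variable {R : Type*} {n : ℕ}

theorem mul_upperShift_apply [NonAssocSemiring R] (A : Matrix (Fin n) (Fin n) R) (i j : Fin n) :
    (A * upperShift R n) i j = if h : 0 < (j : ℕ) then A i ⟨j - 1, by omega⟩ else 0 := by
  rw [mul_apply]
  split_ifs with h
  · rw [Finset.sum_eq_single ⟨j - 1, by omega⟩]
    · simp only [upperShift, of_apply, mul_ite, mul_one, mul_zero, ite_eq_left_iff]; omega
    · intro k _ hk
      simp only [upperShift, of_apply]
      rw [if_neg (by intro e; apply hk; ext; simp only; omega), mul_zero]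
    · simp
  · refine Finset.sum_eq_zero fun k _ => ?_
    simp only [upperShift, of_apply]
    rw [if_neg (by omega), mul_zero]

theorem upperShift_mul_apply [NonAssocSemiring R] (A : Matrix (Fin n) (Fin n) R) (i j : Fin n) :
    (upperShift R n * A) i j = if h : (i : ℕ) + 1 < n then A ⟨i + 1, h⟩ j else 0 := by
  rw [mul_apply]
  split_ifs with h
  · rw [Finset.sum_eq_single ⟨i + 1, h⟩]
    · simp [upperShift]
    · intro k _ hk
      simp only [upperShift, of_apply]
      rw [if_neg (by intro e; apply hk; ext; simp only; omega), zero_mul]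
    · simp
  · refine Finset.sum_eq_zero fun k _ => ?_
    simp only [upperShift, of_apply]
    rw [if_neg (by omega), zero_mul]

theorem one_sub_upperShift_mul_strictUpperOnes [Ring R] :
    (1 - upperShift R n) * strictUpperOnes R n = upperShift R n := by
  ext i j
  rw [sub_mul, one_mul, sub_apply, upperShift_mul_apply]
  simp only [strictUpperOnes, upperShift, of_apply, Fin.lt_def]
  split_ifs <;> first | omega | simp

theorem isStrictUpperTriangular_upperShift [Zero R] [One R] :
    (upperShift R n).IsStrictUpperTriangular := fun i j hji => by
  simp only [upperShift, of_apply, ite_eq_right_iff]; omega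

namespace IsStrictUpperTriangular

variable [Semiring R] {X : Matrix (Fin n) (Fin n) R}

theorem pow_apply_eq_zero (hX : X.IsStrictUpperTriangular) (k : ℕ) :
    ∀ i j : Fin n, (j : ℕ) < i + k → (X ^ k) i j = 0 := by
  induction k with
  | zero =>
    intro i j hij
    simp only [pow_zero, one_apply, Fin.ext_iff, ite_eq_right_iff]; omega
  | succ k ih =>
    intro i j hij
    rw [pow_succ', mul_apply]
    refine Finset.sum_eq_zero fun l _ => ?_
    rcases le_or_gt l i with hli | hil
    · rw [hX hli, zero_mul]
    · rw [ih l j (by omega), mul_zero]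

theorem pow_card_eq_zero (hX : X.IsStrictUpperTriangular) : X ^ n = 0 := by
  ext i j
  exact hX.pow_apply_eq_zero n i j (by omega)

theorem isNilpotent (hX : X.IsStrictUpperTriangular) : IsNilpotent X :=
  ⟨n, hX.pow_card_eq_zero⟩

theorem pow_apply_ne_zero [NoZeroDivisors R] [Nontrivial R] (hX : X.IsStrictUpperTriangular)
    (hsup : ∀ i j : Fin n, (i : ℕ) + 1 = j → X i j ≠ 0) (k : ℕ) :
    ∀ i j : Fin n, (j : ℕ) = i + k → (X ^ k) i j ≠ 0 := by
  induction k with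
  | zero =>
    intro i j hij
    simp [show i = j from Fin.ext hij.symm]
  | succ k ih =>
    intro i j hij
    let i' : Fin n := ⟨i + 1, by omega⟩
    rw [pow_succ', mul_apply, Finset.sum_eq_single i']
    · exact mul_ne_zero (hsup i i' rfl) (ih i' j (by simp only [i']; omega))
    · intro l _ hl
      rcases le_or_gt l i with hli | hil
      · rw [hX hli, zero_mul]
      · have hne : (l : ℕ) ≠ i + 1 := fun h => hl (Fin.ext h)
        rw [hX.pow_apply_eq_zero k l j (by omega), mul_zero]
    · simp

theorem exists_isUnit_det_mul_eq_mul_upperShift {K : Type*} [Field K]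
    {X : Matrix (Fin n) (Fin n) K} (hX : X.IsStrictUpperTriangular)
    (hsup : ∀ i j : Fin n, (i : ℕ) + 1 = j → X i j ≠ 0) :
    ∃ P : Matrix (Fin n) (Fin n) K, IsUnit P.det ∧ X * P = P * upperShift K n := by
  let P : Matrix (Fin n) (Fin n) K :=
    of fun i j => (X ^ (n - 1 - j)) i ⟨n - 1, Nat.sub_one_lt_of_lt j.isLt⟩
  refine ⟨P, ?_, ?_⟩
  · have hP : P.IsUpperTriangular := fun i j hji =>
      hX.pow_apply_eq_zero _ _ _ (by simp only [id_eq] at hji ⊢; omega)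
    rw [det_of_isUpperTriangular hP, isUnit_iff_ne_zero, Finset.prod_ne_zero_iff]
    exact fun i _ => hX.pow_apply_ne_zero hsup _ _ _ (by simp only; omega)
  · ext i j
    rw [mul_upperShift_apply, mul_apply]
    simp only [P, of_apply]
    rw [← mul_apply, ← pow_succ']
    split_ifs with hj
    · rw [show n - 1 - (j - 1) = n - 1 - j + 1 by omega]
    · rw [show n - 1 - j + 1 = n by omega, hX.pow_card_eq_zero, zero_apply]

end IsStrictUpperTriangular

end Matrix

def signedRev (n : ℕ) : Matrix (Fin n) (Fin n) ℂ :=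
  (diagonal fun i : Fin n => (-1 : ℂ) ^ (i : ℕ)).submatrix id Fin.revPerm

theorem signedRev_apply {n : ℕ} (i j : Fin n) :
    signedRev n i j = if (i : ℕ) + j = n - 1 then (-1 : ℂ) ^ (i : ℕ) else 0 := by
  simp only [signedRev, submatrix_apply, id, Fin.revPerm_apply, diagonal_apply, Fin.ext_iff,
    Fin.val_rev]
  split_ifs <;> first | rfl | omega

theorem isUnit_det_signedRev (n : ℕ) : IsUnit (signedRev n).det := by
  rw [signedRev, det_permute', det_diagonal]
  simp [Finset.prod_eq_zero_iff]

theorem jordanBlock_eq (n : ℕ) (c : ℂ) : jordanBlock n c = c • 1 + upperShift ℂ n := by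
  ext i j
  simp only [jordanBlock, upperShift, of_apply, Matrix.add_apply, Matrix.smul_apply, one_apply,
    Fin.ext_iff]
  split_ifs <;> first | omega | simp

namespace Gamma

theorem transpose_eq (n : ℕ) : (Gamma n)ᵀ = signedRev n * (1 - upperShift ℂ n) := by
  ext i j
  rw [mul_sub, mul_one, Matrix.sub_apply, mul_upperShift_apply]
  simp only [signedRev_apply, transpose_apply, Gamma, of_apply]
  split_ifs <;> first | omega | ring

theorem eq_smul (n : ℕ) :
    Gamma n = (-1 : ℂ) ^ (n + 1) • (signedRev n * (1 + upperShift ℂ n)) := by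
  ext i j
  rw [mul_add, mul_one, Matrix.smul_apply, Matrix.add_apply, mul_upperShift_apply, smul_eq_mul]
  simp only [signedRev_apply, Gamma, of_apply]
  split_ifs <;> first | omega | simp only [add_zero, zero_add, mul_zero, ← pow_add]
  all_goals exact neg_one_pow_congr (by simp only [Nat.even_iff]; omega)

theorem isUnit_det (n : ℕ) : IsUnit (Gamma n).det := by
  rw [← det_transpose, transpose_eq, det_mul]
  exact (isUnit_det_signedRev n).mul
    ((isUnit_iff_isUnit_det _).mp isStrictUpperTriangular_upperShift.isNilpotent.isUnit_one_sub)

theorem transpose_inv_mul_self (n : ℕ) :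
    ((Gamma n)ᵀ)⁻¹ * Gamma n = (-1 : ℂ) ^ (n + 1) • (1 + 2 • strictUpperOnes ℂ n) := by
  have h : (Gamma n)ᵀ * ((-1 : ℂ) ^ (n + 1) • (1 + 2 • strictUpperOnes ℂ n)) = Gamma n := by
    conv_rhs => rw [eq_smul n]
    rw [transpose_eq, mul_smul_comm, mul_assoc, mul_add, mul_one, mul_smul_comm,
      one_sub_upperShift_mul_strictUpperOnes]
    congr 2
    abel
  conv_lhs => arg 2; rw [← h]
  exact nonsing_inv_mul_cancel_left _ _ (isUnit_det_transpose _ (isUnit_det n))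

end Gamma

theorem gamma_cosquare_similar_jordan_general (n : ℕ) :
    IsUnit (Gamma n).det ∧
    ∃ P : Matrix (Fin n) (Fin n) ℂ, IsUnit P.det ∧
      P⁻¹ * (((Gamma n)ᵀ)⁻¹ * Gamma n) * P = jordanBlock n ((-1 : ℂ) ^ (n + 1)) := by
  have hX : ((-1 : ℂ) ^ (n + 1) • 2 • strictUpperOnes ℂ n).IsStrictUpperTriangular :=
    fun i j hji => by simp [strictUpperOnes, not_lt.mpr hji]
  obtain ⟨P, hP, hXP⟩ := hX.exists_isUnit_det_mul_eq_mul_upperShift fun i j hij => by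
    simp [strictUpperOnes, show i < j from Fin.lt_def.mpr (by omega)]
  refine ⟨Gamma.isUnit_det n, P, hP, ?_⟩
  rw [Gamma.transpose_inv_mul_self, jordanBlock_eq, smul_add, mul_add, add_mul, Matrix.mul_smul,
    mul_one, Matrix.smul_mul, nonsing_inv_mul _ hP, mul_assoc, hXP,
    nonsing_inv_mul_cancel_left _ _ hP]

/-- For every `n ≥ 1`, the matrix `Γ_n` is nonsingular and
`Γ_n⁻ᵀ Γ_n` is similar to the Jordan block `J_n((-1)^(n+1))`. -/
theorem gamma_cosquare_similar_jordan (n : ℕ) (hn : 1 ≤ n) :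
    IsUnit (Gamma n).det ∧
    ∃ P : Matrix (Fin n) (Fin n) ℂ, IsUnit P.det ∧
      P⁻¹ * (((Gamma n)ᵀ)⁻¹ * Gamma n) * P = jordanBlock n ((-1 : ℂ) ^ (n + 1)) :=
  gamma_cosquare_similar_jordan_general n
end

section
/- For every n ≥ 1, the complex matrix Δ_n is nonsingular and Δ_n^{−*} Δ_n is similar to the Jordan block J_n(1). -/
open Matrix

/-- The `n × n` complex matrix `Δ_n`. -/
def Delta (n : ℕ) : Matrix (Fin n) (Fin n) ℂ :=
  Matrix.of fun i j =>
    if (i : ℕ) + (j : ℕ) = n - 1 then 1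
    else if (i : ℕ) + (j : ℕ) = n then Complex.I else 0

namespace DeltaAux

/-- scalar entries of the similarity matrix -/
noncomputable def pp (n a b : ℕ) : ℂ :=
  Complex.I ^ (n - 1 - a) * 2 ^ (n - 1 - b) * (Nat.choose (n - 1 - a) (n - 1 - b) : ℂ)

/-- the similarity matrix -/
noncomputable def Pm (n : ℕ) : Matrix (Fin n) (Fin n) ℂ :=
  Matrix.of fun i j => pp n i j

/-- pad a matrix with zeros to ℕ-indices -/
def pad {n : ℕ} (M : Matrix (Fin n) (Fin n) ℂ) (a b : ℕ) : ℂ :=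
  if h : a < n ∧ b < n then M ⟨a, h.1⟩ ⟨b, h.2⟩ else 0

lemma pad_lt {n : ℕ} (M : Matrix (Fin n) (Fin n) ℂ) {a b : ℕ} (ha : a < n) (hb : b < n) :
    pad M a b = M ⟨a, ha⟩ ⟨b, hb⟩ := by
  simp [pad, ha, hb]

lemma pad_ge {n : ℕ} (M : Matrix (Fin n) (Fin n) ℂ) {a : ℕ} (ha : n ≤ a) (b : ℕ) :
    pad M a b = 0 := by
  have : ¬ (a < n ∧ b < n) := by omega
  simp [pad, this]

lemma sum_if_eq {n : ℕ} (m : ℕ) (f : Fin n → ℂ) :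
    (∑ k : Fin n, if (k : ℕ) = m then f k else 0) =
      if h : m < n then f ⟨m, h⟩ else 0 := by
  split
  · next h =>
    have hc : ∀ k : Fin n, ((k : ℕ) = m) = (k = ⟨m, h⟩) := fun k => by
      simp [Fin.ext_iff]
    simp only [hc]
    simp
  · next h =>
    apply Finset.sum_eq_zero
    intro k _
    have hk := k.isLt
    have : (k : ℕ) ≠ m := by omega
    simp [this]

lemma dite_pad {n : ℕ} (M : Matrix (Fin n) (Fin n) ℂ) (m : ℕ) (j : Fin n) :
    (if h : m < n then M ⟨m, h⟩ j else 0) = pad M m (j : ℕ) := by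
  split
  · next h => rw [pad_lt M h j.isLt]
  · next h => rw [pad_ge M (by omega)]

lemma Delta_mul {n : ℕ} (hn : 1 ≤ n) (M : Matrix (Fin n) (Fin n) ℂ) (i j : Fin n) :
    (Delta n * M) i j = pad M (n - 1 - (i : ℕ)) (j : ℕ)
      + Complex.I * pad M (n - (i : ℕ)) (j : ℕ) := by
  rw [Matrix.mul_apply]
  have key : ∀ k : Fin n, Delta n i k * M k j =
      (if (k : ℕ) = n - 1 - (i : ℕ) then M k j else 0)
      + (if (k : ℕ) = n - (i : ℕ) then Complex.I * M k j else 0) := by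
    intro k
    have hi := i.isLt
    have hk := k.isLt
    simp only [Delta, Matrix.of_apply]
    by_cases h1 : (i : ℕ) + (k : ℕ) = n - 1
    · have e1 : (k : ℕ) = n - 1 - (i : ℕ) := by omega
      have e2 : ¬ ((k : ℕ) = n - (i : ℕ)) := by omega
      rw [if_pos h1, one_mul, if_pos e1, if_neg e2, add_zero]
    · by_cases h2 : (i : ℕ) + (k : ℕ) = n
      · have e1 : ¬ ((k : ℕ) = n - 1 - (i : ℕ)) := by omega
        have e2 : (k : ℕ) = n - (i : ℕ) := by omega
        rw [if_neg h1, if_pos h2, if_neg e1, if_pos e2, zero_add]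
      · have e1 : ¬ ((k : ℕ) = n - 1 - (i : ℕ)) := by omega
        have e2 : ¬ ((k : ℕ) = n - (i : ℕ)) := by omega
        rw [if_neg h1, if_neg h2, if_neg e1, if_neg e2, zero_mul, add_zero]
  rw [Finset.sum_congr rfl (fun k _ => key k), Finset.sum_add_distrib,
    sum_if_eq, sum_if_eq]
  congr 1
  · exact dite_pad M _ j
  · rw [← dite_pad M (n - (i:ℕ)) j]
    split <;> simp

lemma DeltaH_mul {n : ℕ} (hn : 1 ≤ n) (M : Matrix (Fin n) (Fin n) ℂ) (i j : Fin n) :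
    ((Delta n)ᴴ * M) i j = pad M (n - 1 - (i : ℕ)) (j : ℕ)
      - Complex.I * pad M (n - (i : ℕ)) (j : ℕ) := by
  rw [Matrix.mul_apply]
  have key : ∀ k : Fin n, (Delta n)ᴴ i k * M k j =
      (if (k : ℕ) = n - 1 - (i : ℕ) then M k j else 0)
      + (if (k : ℕ) = n - (i : ℕ) then -(Complex.I * M k j) else 0) := by
    intro k
    have hi := i.isLt
    have hk := k.isLt
    simp only [Delta, Matrix.conjTranspose_apply, Matrix.of_apply]
    by_cases h1 : (k : ℕ) + (i : ℕ) = n - 1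
    · have e1 : (k : ℕ) = n - 1 - (i : ℕ) := by omega
      have e2 : ¬ ((k : ℕ) = n - (i : ℕ)) := by omega
      rw [if_pos h1, star_one, one_mul, if_pos e1, if_neg e2, add_zero]
    · by_cases h2 : (k : ℕ) + (i : ℕ) = n
      · have e1 : ¬ ((k : ℕ) = n - 1 - (i : ℕ)) := by omega
        have e2 : (k : ℕ) = n - (i : ℕ) := by omega
        rw [if_neg h1, if_pos h2, Complex.star_def, Complex.conj_I, if_neg e1, if_pos e2, zero_add,
          neg_mul]
      · have e1 : ¬ ((k : ℕ) = n - 1 - (i : ℕ)) := by omega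
        have e2 : ¬ ((k : ℕ) = n - (i : ℕ)) := by omega
        rw [if_neg h1, if_neg h2, star_zero, zero_mul, if_neg e1, if_neg e2, add_zero]
  rw [Finset.sum_congr rfl (fun k _ => key k), Finset.sum_add_distrib,
    sum_if_eq, sum_if_eq]
  rw [sub_eq_add_neg]
  congr 1
  · exact dite_pad M _ j
  · rw [← dite_pad M (n - (i:ℕ)) j]
    split <;> simp

lemma mul_J {n : ℕ} (M : Matrix (Fin n) (Fin n) ℂ) (i j : Fin n) :
    (M * jordanBlock n 1) i j = M i j +
      (if 1 ≤ (j : ℕ) then pad M (i : ℕ) ((j : ℕ) - 1) else 0) := by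
  rw [Matrix.mul_apply]
  have key : ∀ k : Fin n, M i k * jordanBlock n 1 k j =
      (if k = j then M i k else 0)
      + (if (k : ℕ) + 1 = (j : ℕ) then M i k else 0) := by
    intro k
    simp only [jordanBlock, Matrix.of_apply]
    by_cases h1 : k = j
    · have e2 : ¬ ((k : ℕ) + 1 = (j : ℕ)) := by subst h1; omega
      simp [h1, e2]
    · by_cases h2 : (k : ℕ) + 1 = (j : ℕ) <;> simp [h1, h2]
  rw [Finset.sum_congr rfl (fun k _ => key k), Finset.sum_add_distrib]
  congr 1
  · simp
  · by_cases hj : 1 ≤ (j : ℕ)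
    · have hc : ∀ k : Fin n, ((k : ℕ) + 1 = (j : ℕ)) = ((k : ℕ) = (j : ℕ) - 1) := fun k => by
        simp only [eq_iff_iff]; omega
      simp only [hc]
      rw [sum_if_eq]
      have h1 : (j : ℕ) - 1 < n := by have := j.isLt; omega
      rw [dif_pos h1, if_pos hj, pad_lt M i.isLt h1]
    · have hj0 : (j : ℕ) = 0 := by omega
      rw [if_neg hj]
      apply Finset.sum_eq_zero
      intro k _
      have : ¬ ((k : ℕ) + 1 = (j : ℕ)) := by omega
      simp [this]

lemma pad_Pm {n : ℕ} {a : ℕ} (ha : a < n) {b : ℕ} (hb : b < n) :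
    pad (Pm n) a b = pp n a b := by
  rw [pad_lt _ ha hb]; rfl

lemma key_identity {n : ℕ} (hn : 1 ≤ n) :
    Delta n * Pm n = (Delta n)ᴴ * Pm n * jordanBlock n 1 := by
  ext i j
  have hi := i.isLt
  have hj := j.isLt
  rw [Delta_mul hn, mul_J, DeltaH_mul hn]
  have hrec : ∀ b : ℕ, b < n →
      (if 1 ≤ b then pad ((Delta n)ᴴ * Pm n) (i : ℕ) (b - 1) else 0)
      = (if 1 ≤ b then pad (Pm n) (n - 1 - (i : ℕ)) (b - 1)
          - Complex.I * pad (Pm n) (n - (i : ℕ)) (b - 1) else 0) := by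
    intro b hb
    split
    · next h1 =>
      have hb1 : b - 1 < n := by omega
      rw [pad_lt _ i.isLt hb1, DeltaH_mul hn]
    · rfl
  rw [hrec (j : ℕ) hj]
  -- now scalar identity
  have h1 : n - 1 - (i : ℕ) < n := by omega
  rw [pad_Pm h1 hj]
  by_cases hi0 : (i : ℕ) = 0
  · -- second-row terms vanish
    have : n ≤ n - (i : ℕ) := by omega
    rw [pad_ge _ this]
    split
    · next hj1 =>
      have hb1 : (j : ℕ) - 1 < n := by omega
      rw [pad_Pm h1 hb1, pad_ge _ this]
      have : pp n (n - 1 - (i:ℕ)) ((j:ℕ) - 1) = 0 := by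
        unfold pp
        have e1 : n - 1 - (n - 1 - (i:ℕ)) = 0 := by omega
        have e2 : 0 < n - 1 - ((j:ℕ) - 1) := by omega
        rw [e1, Nat.choose_eq_zero_of_lt e2]
        simp
      rw [this]
      ring
    · ring
  · have hia : 1 ≤ (i : ℕ) := by omega
    have h2 : n - (i : ℕ) < n := by omega
    rw [pad_Pm h2 hj]
    have e1 : n - 1 - (n - (i:ℕ)) = (i:ℕ) - 1 := by omega
    have e2 : n - 1 - (n - 1 - (i:ℕ)) = (i:ℕ) := by omega
    by_cases hj0 : (j : ℕ) = 0
    · have hj1 : ¬ (1 ≤ (j : ℕ)) := by omega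
      rw [if_neg hj1]
      have : pp n (n - (i:ℕ)) (j:ℕ) = 0 := by
        unfold pp
        have e3 : n - 1 - (i:ℕ) - 1 < n - 1 - (j:ℕ) := by omega
        rw [e1, Nat.choose_eq_zero_of_lt (by omega : (i:ℕ) - 1 < n - 1 - (j:ℕ))]
        simp
      rw [this]
      ring
    · have hj1 : 1 ≤ (j : ℕ) := by omega
      rw [if_pos hj1]
      have hb1 : (j : ℕ) - 1 < n := by omega
      rw [pad_Pm h1 hb1, pad_Pm h2 hb1]
      unfold pp
      rw [e1, e2]
      have e3 : n - 1 - ((j:ℕ) - 1) = n - (j:ℕ) := by omega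
      rw [e3]
      have e4 : (i:ℕ) = ((i:ℕ) - 1) + 1 := by omega
      have e5 : n - (j:ℕ) = (n - 1 - (j:ℕ)) + 1 := by omega
      rw [e4, e5, Nat.choose_succ_succ, pow_succ, pow_succ]
      push_cast
      ring

lemma Pm_isUnit_det {n : ℕ} : IsUnit (Pm n).det := by
  have htri : (Pm n).BlockTriangular id := by
    intro i j hij
    have h : n - 1 - (i : ℕ) < n - 1 - (j : ℕ) := by
      have hi := i.isLt; have hj := j.isLt
      simp only [id] at hij
      have : (j : ℕ) < (i : ℕ) := hij
      omega
    simp only [Pm, Matrix.of_apply, pp]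
    rw [Nat.choose_eq_zero_of_lt h]
    simp
  rw [Matrix.det_of_upperTriangular htri]
  rw [isUnit_iff_ne_zero]
  rw [Finset.prod_ne_zero_iff]
  intro i _
  simp only [Pm, Matrix.of_apply, pp, Nat.choose_self]
  simp [Complex.I_ne_zero]

lemma Delta_isUnit_det {n : ℕ} (hn : 1 ≤ n) : IsUnit (Delta n).det := by
  set B : Matrix (Fin n) (Fin n) ℂ := Matrix.of fun k j =>
    if (k : ℕ) + (j : ℕ) ≤ n - 1 then (-Complex.I) ^ (n - 1 - (j : ℕ) - (k : ℕ)) else 0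
    with hB
  apply Matrix.isUnit_det_of_right_inverse (B := B)
  ext i j
  have hi := i.isLt
  have hj := j.isLt
  rw [Delta_mul hn]
  have h1 : n - 1 - (i : ℕ) < n := by omega
  rw [pad_lt _ h1 hj]
  simp only [hB, Matrix.of_apply, Matrix.one_apply]
  by_cases hij : i = j
  · subst hij
    have c1 : (n - 1 - (i:ℕ)) + (i:ℕ) ≤ n - 1 := by omega
    have e1 : n - 1 - (i:ℕ) - (n - 1 - (i:ℕ)) = 0 := by omega
    rw [if_pos c1, e1, pow_zero]
    by_cases hi0 : (i : ℕ) = 0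
    · have : n ≤ n - (i:ℕ) := by omega
      rw [pad_ge _ this]
      simp
    · have h2 : n - (i : ℕ) < n := by omega
      rw [pad_lt _ h2 i.isLt]
      simp only [Matrix.of_apply]
      have c2 : ¬ ((n - (i:ℕ)) + (i:ℕ) ≤ n - 1) := by omega
      rw [if_neg c2]
      simp
  · have hne : (i : ℕ) ≠ (j : ℕ) := fun h => hij (Fin.ext h)
    rw [if_neg hij]
    by_cases hlt : (j : ℕ) < (i : ℕ)
    · have c1 : (n - 1 - (i:ℕ)) + (j:ℕ) ≤ n - 1 := by omega
      rw [if_pos c1]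
      have h2 : n - (i : ℕ) < n := by omega
      rw [pad_lt _ h2 j.isLt]
      simp only [Matrix.of_apply]
      have c2 : (n - (i:ℕ)) + (j:ℕ) ≤ n - 1 := by omega
      rw [if_pos c2]
      have e1 : n - 1 - (j:ℕ) - (n - 1 - (i:ℕ)) = ((i:ℕ) - (j:ℕ) - 1) + 1 := by omega
      have e2 : n - 1 - (j:ℕ) - (n - (i:ℕ)) = (i:ℕ) - (j:ℕ) - 1 := by omega
      rw [e1, e2, pow_succ]
      ring
    · have c1 : ¬ ((n - 1 - (i:ℕ)) + (j:ℕ) ≤ n - 1) := by omega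
      rw [if_neg c1]
      by_cases hi0 : (i : ℕ) = 0
      · have : n ≤ n - (i:ℕ) := by omega
        rw [pad_ge _ this]
        simp
      · have h2 : n - (i : ℕ) < n := by omega
        rw [pad_lt _ h2 j.isLt]
        simp only [Matrix.of_apply]
        have c2 : ¬ ((n - (i:ℕ)) + (j:ℕ) ≤ n - 1) := by omega
        rw [if_neg c2]
        simp

end DeltaAux

/-- For every `n ≥ 1`, the complex matrix `Δ_n` is nonsingular
and `Δ_n⁻* Δ_n` is similar to the Jordan block `J_n(1)`. -/
theorem delta_cosquare_similar_jordan (n : ℕ) (hn : 1 ≤ n) :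
    IsUnit (Delta n).det ∧
    ∃ P : Matrix (Fin n) (Fin n) ℂ, IsUnit P.det ∧
      P⁻¹ * (((Delta n)ᴴ)⁻¹ * Delta n) * P = jordanBlock n 1 := by
  have hdet := DeltaAux.Delta_isUnit_det hn
  refine ⟨hdet, DeltaAux.Pm n, DeltaAux.Pm_isUnit_det, ?_⟩
  have hdetH : IsUnit ((Delta n)ᴴ).det := by
    rw [Matrix.det_conjTranspose]
    rw [isUnit_iff_ne_zero] at hdet ⊢
    simpa using hdet
  have hkey := DeltaAux.key_identity hn
  have h1 : ((Delta n)ᴴ)⁻¹ * Delta n * DeltaAux.Pm n = DeltaAux.Pm n * jordanBlock n 1 := by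
    rw [Matrix.mul_assoc, hkey, Matrix.mul_assoc, ← Matrix.mul_assoc (((Delta n)ᴴ)⁻¹),
      Matrix.nonsing_inv_mul _ hdetH, Matrix.one_mul]
  calc (DeltaAux.Pm n)⁻¹ * (((Delta n)ᴴ)⁻¹ * Delta n) * DeltaAux.Pm n
      = (DeltaAux.Pm n)⁻¹ * (((Delta n)ᴴ)⁻¹ * Delta n * DeltaAux.Pm n) := by
        rw [Matrix.mul_assoc]
    _ = (DeltaAux.Pm n)⁻¹ * (DeltaAux.Pm n * jordanBlock n 1) := by rw [h1]
    _ = jordanBlock n 1 := by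
        rw [← Matrix.mul_assoc, Matrix.nonsing_inv_mul _ DeltaAux.Pm_isUnit_det,
          Matrix.one_mul]
end

section
/- For every n×n matrix M over F, the 2n×2n block matrix [[0, I_n],[M, 0]] is *congruent to its transpose via a coninvolutory matrix: there exists a coninvolutory matrix T over F such that T* [[0, I_n],[M, 0]] T = [[0, M^T],[I_n, 0]]. -/
open Matrix Polynomial

/-!
By Taussky–Zassenhaus, `M * P = P * Mᵀ` for some symmetric invertible `P`. Coordinate-free, this
says that `Mᵀ` is self-adjoint for a nondegenerate symmetric bilinear form on `Fⁿ`, i.e. that `Fⁿ`,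
made an `F[X]`-module through `Mᵀ`, carries a nondegenerate symmetric form for which every
polynomial acts self-adjointly. Such a form exists on each cyclic module `F[X] ⧸ (g)`, namely
`(u, v) ↦` the coefficient of `X ^ (deg g - 1)` in `u * v mod g`, hence on finite direct sums of
them, hence on every finite-dimensional `F[X]`-module by the structure theorem over a PID.

Given `P`, the block matrix `T = [[0, P], [σ(P⁻¹), 0]]` is coninvolutory, and
`T* [[0, 1], [M, 0]] T = [[0, P⁻¹ M P], [1, 0]] = [[0, Mᵀ], [1, 0]]`.
-/

def HasSymmetricInvariantForm (F V : Type*) [Field F] [AddCommGroup V] [Module F V]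
    [Module F[X] V] : Prop :=
  ∃ B : LinearMap.BilinForm F V, B.IsSymm ∧ B.Nondegenerate ∧
    ∀ (p : F[X]) (u v : V), B (p • u) v = B u (p • v)

section

variable {F : Type*} [Field F]

namespace HasSymmetricInvariantForm

theorem of_linearEquiv {V W : Type*} [AddCommGroup V] [Module F V] [Module F[X] V]
    [IsScalarTower F F[X] V] [AddCommGroup W] [Module F W] [Module F[X] W]
    [IsScalarTower F F[X] W] (e : V ≃ₗ[F[X]] W) (h : HasSymmetricInvariantForm F W) :
    HasSymmetricInvariantForm F V := by
  obtain ⟨B, hsymm, hnd, hinv⟩ := h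
  refine ⟨B.congr (e.restrictScalars F).symm, ⟨fun u v => hsymm.eq _ _⟩, hnd.congr _,
    fun p u v => ?_⟩
  simp only [LinearMap.BilinForm.congr_apply, LinearEquiv.symm_symm,
    LinearEquiv.restrictScalars_apply, map_smul, hinv]

theorem directSum {ι : Type*} [Fintype ι] [DecidableEq ι] {V : ι → Type*}
    [∀ i, AddCommGroup (V i)] [∀ i, Module F (V i)] [∀ i, Module F[X] (V i)]
    (h : ∀ i, HasSymmetricInvariantForm F (V i)) :
    HasSymmetricInvariantForm F (DirectSum ι V) := by
  choose B hsymm hnd hinv using h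
  let π i := DirectSum.component F ι V i
  let B' : LinearMap.BilinForm F (DirectSum ι V) := ∑ i, (B i).compl₁₂ (π i) (π i)
  have hB' (u v : DirectSum ι V) : B' u v = ∑ i, B i (u i) (v i) := by
    simp only [B', LinearMap.coe_sum, Finset.sum_apply, LinearMap.compl₁₂_apply]
    rfl
  have hsymm' : B'.IsSymm := ⟨fun u v => by simp only [hB', (hsymm _).eq (u _)]⟩
  refine ⟨B', hsymm', (hsymm'.isRefl.nondegenerate_iff_separatingLeft).mpr fun u hu => ?_,
    fun p u v => by simp only [hB', DirectSum.smul_apply, hinv]⟩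
  ext i
  refine (hnd i).1 _ fun w => ?_
  have hw := hu (DirectSum.of V i w)
  rw [hB', Finset.sum_eq_single i] at hw
  · simpa using hw
  · intro j _ hj
    simp [DirectSum.of_eq_of_ne _ _ _ hj]
  · simp

end HasSymmetricInvariantForm

theorem Polynomial.exists_coeff_modByMonic_mul_ne_zero {R : Type*} [Ring R] {g r : R[X]}
    (hg : g.Monic) (hr : r ≠ 0) (hrg : r.degree < g.degree) :
    ∃ s : R[X], ((r * s) %ₘ g).coeff (g.natDegree - 1) ≠ 0 := by
  have : Nontrivial R := Polynomial.nontrivial_iff.mp ⟨r, 0, hr⟩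
  have hlt : r.natDegree < g.natDegree := natDegree_lt_natDegree hr hrg
  set m := g.natDegree - 1 - r.natDegree
  have hrX : r * X ^ m ≠ 0 := (monic_X_pow m).mul_left_ne_zero hr
  have hdeg : (r * X ^ m).natDegree = g.natDegree - 1 := by
    rw [natDegree_mul_X_pow _ hr]
    omega
  refine ⟨X ^ m, ?_⟩
  rw [(modByMonic_eq_self_iff hg).mpr, ← hdeg, natDegree_mul_X_pow _ hr, coeff_mul_X_pow]
  · simpa using hr
  · rw [degree_eq_natDegree hrX, degree_eq_natDegree hg.ne_zero, hdeg]
    exact_mod_cast (by omega : g.natDegree - 1 < g.natDegree)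

theorem hasSymmetricInvariantForm_quotient_span_monic {g : F[X]} (hg : g.Monic) :
    HasSymmetricInvariantForm F (F[X] ⧸ Ideal.span {g}) := by
  let ψ : (F[X] ⧸ Ideal.span {g}) →ₗ[F] F :=
    (lcoeff F (g.natDegree - 1)).comp (AdjoinRoot.modByMonicHom hg)
  have hψ (f : F[X]) : ψ (Ideal.Quotient.mk _ f) = (f %ₘ g).coeff (g.natDegree - 1) :=
    congrArg (coeff · _) (AdjoinRoot.modByMonicHom_mk hg f)
  let B : LinearMap.BilinForm F (F[X] ⧸ Ideal.span {g}) := (LinearMap.mul F _).compr₂ ψ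
  have hsymm : B.IsSymm := ⟨fun u v => by simp [B, mul_comm]⟩
  refine ⟨B, hsymm, (hsymm.isRefl.nondegenerate_iff_separatingLeft).mpr fun u hu => ?_,
    fun p u v => by simp [B, smul_mul_assoc, mul_smul_comm]⟩
  obtain ⟨f, rfl⟩ := Ideal.Quotient.mk_surjective u
  have hf : Ideal.Quotient.mk (Ideal.span {g}) f = Ideal.Quotient.mk _ (f %ₘ g) :=
    Ideal.Quotient.eq.mpr (Ideal.mem_span_singleton'.mpr
      ⟨f /ₘ g, by linear_combination modByMonic_add_div f g⟩)
  suffices f %ₘ g = 0 by rw [hf, this, map_zero]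
  by_contra hr
  obtain ⟨s, hs⟩ := exists_coeff_modByMonic_mul_ne_zero hg hr (degree_modByMonic_lt _ hg)
  apply hs
  simpa [B, ← map_mul, hψ, hf] using hu (Ideal.Quotient.mk _ s)

theorem hasSymmetricInvariantForm_quotient {I : Ideal F[X]} (hI : I ≠ ⊥) :
    HasSymmetricInvariantForm F (F[X] ⧸ I) := by
  classical
  obtain ⟨g, hg, rfl⟩ : ∃ g : F[X], g.Monic ∧ I = Ideal.span {g} := by
    refine ⟨normalize (Submodule.IsPrincipal.generator I), monic_normalize ?_, ?_⟩
    · rwa [Ne, ← Submodule.IsPrincipal.eq_bot_iff_generator_eq_zero]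
    · exact (Submodule.IsPrincipal.span_singleton_generator I).symm.trans
        (Ideal.span_singleton_eq_span_singleton.mpr (associated_normalize _))
  exact hasSymmetricInvariantForm_quotient_span_monic hg

theorem Module.End.exists_isSymm_nondegenerate_isAdjointPair {V : Type*} [AddCommGroup V]
    [Module F V] [FiniteDimensional F V] (φ : Module.End F V) :
    ∃ B : LinearMap.BilinForm F V,
      B.IsSymm ∧ B.Nondegenerate ∧ LinearMap.IsAdjointPair B B φ φ := by
  classical
  obtain ⟨ι, _, p, hp, e, ⟨eqv⟩⟩ :=
    Module.equiv_directSum_of_isTorsion (Module.AEval.isTorsion_of_finiteDimensional F V φ)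
  obtain ⟨B, hsymm, hnd, hinv⟩ : HasSymmetricInvariantForm F (Module.AEval' φ) :=
    .of_linearEquiv eqv <| .directSum fun i => hasSymmetricInvariantForm_quotient <|
      Submodule.span_singleton_eq_bot.not.mpr (pow_ne_zero _ (hp i).ne_zero)
  refine ⟨B.congr (Module.AEval'.of φ).symm, ⟨fun u v => hsymm.eq _ _⟩, hnd.congr _,
    fun u v => ?_⟩
  simpa [Module.AEval'.X_smul_of] using hinv X (Module.AEval'.of φ u) (Module.AEval'.of φ v)

theorem Matrix.exists_isSymm_isUnit_det_mul_eq_mul_transpose {n : Type*} [Fintype n]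
    [DecidableEq n] (M : Matrix n n F) :
    ∃ P : Matrix n n F, P.IsSymm ∧ IsUnit P.det ∧ M * P = P * Mᵀ := by
  obtain ⟨B, hsymm, hnd, hadj⟩ :=
    Module.End.exists_isSymm_nondegenerate_isAdjointPair (toLin' Mᵀ)
  refine ⟨LinearMap.toMatrix₂' F B, ?_, ?_, ?_⟩
  · ext i j
    exact hsymm.eq _ _
  · exact isUnit_iff_ne_zero.mpr (nondegenerate_iff_det_ne_zero.mp hnd.toMatrix₂')
  · rw [← Matrix.toLinearMap₂'_toMatrix' (R := F) B, isAdjointPair_toLinearMap₂'] at hadj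
    simpa [Matrix.IsAdjointPair] using hadj

end

theorem block_star_congruent_transpose_general {F : Type*} [Field F]
    (σ : F →+* F) (hσ : ∀ a : F, σ (σ a) = a)
    {n : ℕ} (M : Matrix (Fin n) (Fin n) F) :
    ∃ T : Matrix (Fin n ⊕ Fin n) (Fin n ⊕ Fin n) F,
      T.map σ * T = 1 ∧
      (T.map σ)ᵀ * Matrix.fromBlocks 0 1 M 0 * T = Matrix.fromBlocks 0 Mᵀ 1 0 := by
  obtain ⟨P, hPsymm, hPdet, hMP⟩ := M.exists_isSymm_isUnit_det_mul_eq_mul_transpose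
  have hinvP : P⁻¹ * P = 1 := nonsing_inv_mul P hPdet
  have hσP : P.map σ * P⁻¹.map σ = 1 := by
    rw [← RingHom.mapMatrix_apply, ← RingHom.mapMatrix_apply, ← map_mul, mul_nonsing_inv P hPdet,
      map_one]
  have hσσ : (P⁻¹.map σ).map σ = P⁻¹ := by
    ext
    simp [hσ]
  have hconj : P⁻¹ * M * P = Mᵀ := by
    rw [Matrix.mul_assoc, hMP, ← Matrix.mul_assoc, hinvP, Matrix.one_mul]
  refine ⟨fromBlocks 0 P (P⁻¹.map σ) 0, ?_, ?_⟩
  · simp [fromBlocks_map, fromBlocks_multiply, hσσ, hσP, hinvP]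
  · simp [fromBlocks_map, fromBlocks_transpose, fromBlocks_multiply, hσσ, hσP, hconj,
      transpose_nonsing_inv, hPsymm.eq, ← transpose_map]

/-- For every `n × n` matrix `M` over a field `F` of
characteristic not two with involution `σ`, the block matrix `[[0, I],[M, 0]]`
is *congruent to its transpose `[[0, Mᵀ],[I, 0]]` via a coninvolutory matrix:
there is `T` with `T̄ T = 1` (where `T̄ = T.map σ`) such that
`T* [[0, I],[M, 0]] T = [[0, Mᵀ],[I, 0]]`, where `T* = (T.map σ)ᵀ`. -/
theorem block_star_congruent_transpose {F : Type*} [Field F] (hchar : (2 : F) ≠ 0)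
    (σ : F →+* F) (hσ : ∀ a : F, σ (σ a) = a)
    {n : ℕ} (M : Matrix (Fin n) (Fin n) F) :
    ∃ T : Matrix (Fin n ⊕ Fin n) (Fin n ⊕ Fin n) F,
      T.map σ * T = 1 ∧
      (T.map σ)ᵀ * Matrix.fromBlocks 0 1 M 0 * T = Matrix.fromBlocks 0 Mᵀ 1 0 :=
  block_star_congruent_transpose_general σ hσ M
end
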